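/- arXiv:2402.02296 — 11 statements merged into one kernel-verified Lean document; each statement's English description precedes it below -/
import Mathlib

section
/- In any bounded lattice L equipped with a preconditional →, the unary operation defined by ¬x := x → 0 is antitone: for all a, b in L, if a ≤ b then ¬b ≤ ¬a. -/
theorem stmt_0 {L : Type*} [Lattice L] [BoundedOrder L] (imp : L → L → L)
    (h1 : ∀ a : L, imp ⊤ a ≤ a)
    (h2 : ∀ a b : L, a ⊓ b ≤ imp a b)
    (h3 : ∀ a b : L, imp a b ≤ imp a (a ⊓ b))
    (h4 : ∀ a b c : L, imp a (b ⊓ c) ≤ imp a b)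
    (h5 : ∀ a b c : L, imp a (imp (a ⊓ b) c) ≤ imp (a ⊓ b) c)
    (a b : L) (hab : a ≤ b) :
    imp b ⊥ ≤ imp a ⊥ := by
  have hba : b ⊓ a = a := inf_eq_right.mpr hab
  have step1 : imp b ⊥ ≤ imp b (imp a ⊥) := by
    have := h4 b (imp a ⊥) ⊥
    simpa using this
  have step2 : imp b (imp a ⊥) ≤ imp a ⊥ := by
    have := h5 b a ⊥
    rwa [hba] at this
  exact step1.trans step2
end

section
/- Let L be a bounded lattice and → a binary operation on L satisfying axioms 3 and 4 of preconditionals (a→b ≤ a→(a∧b) and a→(b∧c) ≤ a→b), modus ponens (a ∧ (a→b) ≤ b), and weak monotonicity (b ≤ a→b). Then → is a Heyting implication: for all a,b,c, a∧b ≤ c if and only if a ≤ b→c. -/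
theorem stmt_3 {L : Type*} [Lattice L] [BoundedOrder L] (imp : L → L → L)
    (h3 : ∀ a b : L, imp a b ≤ imp a (a ⊓ b))
    (h4 : ∀ a b c : L, imp a (b ⊓ c) ≤ imp a b)
    (hmp : ∀ a b : L, a ⊓ imp a b ≤ b)
    (hwm : ∀ a b : L, b ≤ imp a b) :
    ∀ a b c : L, a ⊓ b ≤ c ↔ a ≤ imp b c := by
  intro a b c
  constructor
  · intro h
    have h1 : a ≤ imp b (b ⊓ a) := le_trans (hwm b a) (h3 b a)
    have h2 : b ⊓ a = c ⊓ (b ⊓ a) := by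
      rw [inf_comm a b] at h
      exact (inf_eq_right.mpr h).symm
    rw [h2] at h1
    exact le_trans h1 (h4 b c (b ⊓ a))
  · intro h
    calc a ⊓ b ≤ b ⊓ imp b c := by
          rw [inf_comm]; exact inf_le_inf_left b h
      _ ≤ c := hmp b c
end

section
/- In any ortholattice, the Sasaki hook defined by a → b := ¬a ∨ (a ∧ b) is a preconditional. -/
theorem stmt_5 {L : Type*} [Lattice L] [BoundedOrder L] (neg : L → L)
    (hanti : ∀ a b : L, a ≤ b → neg b ≤ neg a)
    (hsemi : ∀ a : L, a ⊓ neg a = ⊥)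
    (hinv : ∀ a : L, neg (neg a) = a) :
    (∀ a : L, neg ⊤ ⊔ (⊤ ⊓ a) ≤ a) ∧
    (∀ a b : L, a ⊓ b ≤ neg a ⊔ (a ⊓ b)) ∧
    (∀ a b : L, neg a ⊔ (a ⊓ b) ≤ neg a ⊔ (a ⊓ (a ⊓ b))) ∧
    (∀ a b c : L, neg a ⊔ (a ⊓ (b ⊓ c)) ≤ neg a ⊔ (a ⊓ b)) ∧
    (∀ a b c : L,
      neg a ⊔ (a ⊓ (neg (a ⊓ b) ⊔ ((a ⊓ b) ⊓ c))) ≤ neg (a ⊓ b) ⊔ ((a ⊓ b) ⊓ c)) := by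
  have hnegtop : neg ⊤ = ⊥ := by
    have := hsemi ⊤
    simpa using this
  refine ⟨?_, ?_, ?_, ?_, ?_⟩
  · intro a
    simp [hnegtop]
  · intro a b
    exact le_sup_right
  · intro a b
    exact sup_le_sup_left (le_inf inf_le_left (le_refl _)) _
  · intro a b c
    exact sup_le_sup_left (inf_le_inf_left _ inf_le_left) _
  · intro a b c
    exact sup_le (le_trans (hanti _ _ inf_le_left) le_sup_left) inf_le_right
end

section
/- Let L be a bounded lattice with a preconditional → satisfying a ∧ (a→0) = 0 and (a→0)→0 = a for all a. Then, defining ¬a := a→0, L with ¬ is an ortholattice and → coincides with the Sasaki hook: a → b = ¬a ∨ (a ∧ b) for all a, b. -/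
theorem stmt_7 {L : Type*} [Lattice L] [BoundedOrder L] (imp : L → L → L)
    (h1 : ∀ a : L, imp ⊤ a ≤ a)
    (h2 : ∀ a b : L, a ⊓ b ≤ imp a b)
    (h3 : ∀ a b : L, imp a b ≤ imp a (a ⊓ b))
    (h4 : ∀ a b c : L, imp a (b ⊓ c) ≤ imp a b)
    (h5 : ∀ a b c : L, imp a (imp (a ⊓ b) c) ≤ imp (a ⊓ b) c)
    (hsemi : ∀ a : L, a ⊓ imp a ⊥ = ⊥)
    (hinv : ∀ a : L, imp (imp a ⊥) ⊥ = a) :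
    (∀ a b : L, a ≤ b → imp b ⊥ ≤ imp a ⊥) ∧
    (∀ a : L, a ⊓ imp a ⊥ = ⊥) ∧
    (∀ a : L, imp (imp a ⊥) ⊥ = a) ∧
    (∀ a b : L, imp a b = imp a ⊥ ⊔ (a ⊓ b)) := by
  -- monotonicity in the second argument
  have mono : ∀ a b c : L, b ≤ c → imp a b ≤ imp a c := by
    intro a b c h
    have := h4 a c b
    rwa [inf_eq_right.mpr h] at this
  -- antitonicity of ¬ := imp · ⊥
  have anti : ∀ a b : L, a ≤ b → imp b ⊥ ≤ imp a ⊥ := by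
    intro a b h
    have h5' := h5 b a ⊥
    rw [inf_eq_right.mpr h] at h5'
    exact le_trans (mono b ⊥ (imp a ⊥) bot_le) h5'
  -- Galois-style flip
  have neg_le : ∀ a b : L, a ≤ imp b ⊥ → b ≤ imp a ⊥ := by
    intro a b h
    have := anti a (imp b ⊥) h
    rwa [hinv] at this
  -- De Morgan: ¬(a ⊓ b) = ¬a ⊔ ¬b
  have demorgan : ∀ a b : L, imp (a ⊓ b) ⊥ = imp a ⊥ ⊔ imp b ⊥ := by
    intro a b
    apply le_antisymm
    · have ha : imp (imp a ⊥ ⊔ imp b ⊥) ⊥ ≤ a := by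
        have := anti (imp a ⊥) (imp a ⊥ ⊔ imp b ⊥) le_sup_left
        rwa [hinv] at this
      have hb : imp (imp a ⊥ ⊔ imp b ⊥) ⊥ ≤ b := by
        have := anti (imp b ⊥) (imp a ⊥ ⊔ imp b ⊥) le_sup_right
        rwa [hinv] at this
      have := anti (imp (imp a ⊥ ⊔ imp b ⊥) ⊥) (a ⊓ b) (le_inf ha hb)
      rwa [hinv] at this
    · exact sup_le (anti _ _ inf_le_left) (anti _ _ inf_le_right)
  refine ⟨anti, hsemi, hinv, ?_⟩
  intro a b
  apply le_antisymm
  · -- imp a b ≤ ¬a ⊔ (a ⊓ b)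
    set c := imp (a ⊓ b) ⊥ with hc
    have key := h5 a c ⊥
    have step1 : a ⊓ b ≤ imp (a ⊓ c) ⊥ :=
      neg_le (a ⊓ c) (a ⊓ b) inf_le_right
    have step2 : imp a b ≤ imp (a ⊓ c) ⊥ :=
      le_trans (le_trans (h3 a b) (mono a (a ⊓ b) (imp (a ⊓ c) ⊥) step1)) key
    have step3 : imp (a ⊓ c) ⊥ = imp a ⊥ ⊔ (a ⊓ b) := by
      rw [demorgan, hc, hinv]
    rwa [step3] at step2
  · exact sup_le (mono a ⊥ b bot_le) (h2 a b)
end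

section
/- Any preconditional satisfying weak monotonicity (b ≤ a→b for all a,b) satisfies negation import: ¬(a→b) ≤ a→¬b, where ¬x := x→0. -/
theorem stmt_13 {L : Type*} [Lattice L] [BoundedOrder L] (imp : L → L → L)
    (h1 : ∀ a : L, imp ⊤ a ≤ a)
    (h2 : ∀ a b : L, a ⊓ b ≤ imp a b)
    (h3 : ∀ a b : L, imp a b ≤ imp a (a ⊓ b))
    (h4 : ∀ a b c : L, imp a (b ⊓ c) ≤ imp a b)
    (h5 : ∀ a b c : L, imp a (imp (a ⊓ b) c) ≤ imp (a ⊓ b) c)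
    (hwm : ∀ a b : L, b ≤ imp a b)
    (a b : L) :
    imp (imp a b) ⊥ ≤ imp a (imp b ⊥) := by
  -- monotonicity in the second argument
  have mono : ∀ x u v : L, u ≤ v → imp x u ≤ imp x v := by
    intro x u v huv
    have e1 : x ⊓ u = v ⊓ (x ⊓ u) :=
      (inf_eq_right.mpr (le_trans inf_le_right huv)).symm
    calc imp x u ≤ imp x (x ⊓ u) := h3 x u
      _ = imp x (v ⊓ (x ⊓ u)) := by rw [← e1]
      _ ≤ imp x v := h4 x v (x ⊓ u)
  -- antitonicity in the first argument
  have anti : ∀ c d e : L, c ≤ d → imp d e ≤ imp c e := by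
    intro c d e hcd
    have e1 : d ⊓ c = c := inf_eq_right.mpr hcd
    calc imp d e ≤ imp d (imp (d ⊓ c) e) := mono d e _ (hwm (d ⊓ c) e)
      _ ≤ imp (d ⊓ c) e := h5 d c e
      _ = imp c e := by rw [e1]
  calc imp (imp a b) ⊥ ≤ imp b ⊥ := anti b (imp a b) ⊥ (hwm a b)
    _ ≤ imp a (imp b ⊥) := hwm a (imp b ⊥)
end

section
/- Let (W, {R_A}) be a strongly dense selection frame. Then the operation A →_R B := {w ∈ W | for all v, w R_A v implies v ∈ B} is a preconditional on the powerset Boolean algebra ℘(W). -/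
theorem stmt_14 {W : Type*} [Nonempty W] (R : Set W → W → W → Prop)
    (hsuccess : ∀ (A : Set W) (w v : W), R A w v → v ∈ A)
    (hcentering : ∀ (A : Set W) (w : W), w ∈ A → ∀ v, R A w v ↔ v = w)
    (hdense : ∀ (A B : Set W) (w v : W), R (A ∩ B) w v → ∃ u, R A w u ∧ R (A ∩ B) u v) :
    (∀ A : Set W, {w : W | ∀ v, R Set.univ w v → v ∈ A} ⊆ A) ∧
    (∀ A B : Set W, A ∩ B ⊆ {w : W | ∀ v, R A w v → v ∈ B}) ∧
    (∀ A B : Set W,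
      {w : W | ∀ v, R A w v → v ∈ B} ⊆ {w : W | ∀ v, R A w v → v ∈ A ∩ B}) ∧
    (∀ A B C : Set W,
      {w : W | ∀ v, R A w v → v ∈ B ∩ C} ⊆ {w : W | ∀ v, R A w v → v ∈ B}) ∧
    (∀ A B C : Set W,
      {w : W | ∀ v, R A w v → v ∈ {u : W | ∀ x, R (A ∩ B) u x → x ∈ C}} ⊆
        {w : W | ∀ v, R (A ∩ B) w v → v ∈ C}) := by
  refine ⟨?_, ?_, ?_, ?_, ?_⟩
  · intro A w hw
    exact hw w ((hcentering Set.univ w (Set.mem_univ w) w).mpr rfl)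
  · intro A B w hw v hv
    rw [hcentering A w hw.1 v] at hv
    exact hv ▸ hw.2
  · intro A B w hw v hv
    exact ⟨hsuccess A w v hv, hw v hv⟩
  · intro A B C w hw v hv
    exact (hw v hv).1
  · intro A B C w hw v hv
    obtain ⟨u, hu1, hu2⟩ := hdense A B w v hv
    exact hw u hu1 v hu2
end

section
/- Given a well-ordered set (W, ≤), define for each A ⊆ W and w, v ∈ W: w R_A v iff v is the least element of {u ∈ A | w ≤ u}. Then (W, {R_A}) is a strongly dense, functional selection frame. -/
theorem stmt_15 {W : Type*} [Nonempty W] [LinearOrder W] [WellFoundedLT W]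
    (R : Set W → W → W → Prop)
    (hR : ∀ (A : Set W) (w v : W), R A w v ↔ IsLeast {u ∈ A | w ≤ u} v) :
    (∀ (A : Set W) (w v : W), R A w v → v ∈ A) ∧
    (∀ (A : Set W) (w : W), w ∈ A → ∀ v, R A w v ↔ v = w) ∧
    (∀ (A : Set W) (w v u : W), R A w v → R A w u → v = u) ∧
    (∀ (A B : Set W) (w v : W), R (A ∩ B) w v → ∃ u, R A w u ∧ R (A ∩ B) u v) := by
  refine ⟨?_, ?_, ?_, ?_⟩
  · intro A w v h
    exact ((hR A w v).1 h).1.1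
  · intro A w hw v
    rw [hR]
    constructor
    · intro h
      exact le_antisymm (h.2 ⟨hw, le_refl _⟩) h.1.2
    · rintro rfl
      exact ⟨⟨hw, le_refl _⟩, fun x hx => hx.2⟩
  · intro A w v u h1 h2
    exact ((hR A w v).1 h1).unique ((hR A w u).1 h2)
  · intro A B w v h
    rw [hR] at h
    obtain ⟨⟨⟨hvA, hvB⟩, hwv⟩, hlb⟩ := h
    have hne : ({x ∈ A | w ≤ x}).Nonempty := ⟨v, hvA, hwv⟩
    obtain ⟨u, huS, hmin⟩ := wellFounded_lt.has_min _ hne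
    have huleast : IsLeast {x ∈ A | w ≤ x} u :=
      ⟨huS, fun x hx => not_lt.1 (hmin x hx)⟩
    refine ⟨u, (hR A w u).2 huleast, (hR _ u v).2 ⟨⟨⟨hvA, hvB⟩, huleast.2 ⟨hvA, hwv⟩⟩, ?_⟩⟩
    intro x hx
    exact hlb ⟨hx.1, le_trans huS.2 hx.2⟩
end

section
/- Let W = {0,...,10}, and for each w ∈ W define a probability measure μ_w on ℘(W) by μ_w({w}) = 0.9 and μ_w({v}) = 0.01 for v ≠ w (extended additively). Define A → B := {w ∈ W | μ_w(A ∩ B)/μ_w(A) ≥ 0.9}, i.e. via conditional probability, with an appropriate convention for the case μ_w(A) = 0. Then → is a preconditional on ℘(W) satisfying modus ponens (A ∩ (A→B) ⊆ B), but → fails normality: there exist A, B, C ⊆ W with (A→B) ∩ (A→C) ⊄ A→(B∩C). -/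
noncomputable def mu16 (w : Fin 11) (A : Finset (Fin 11)) : ℚ :=
  ∑ v ∈ A, (if v = w then (9 : ℚ)/10 else 1/100)

noncomputable def imp16 (A B : Finset (Fin 11)) : Finset (Fin 11) :=
  Finset.univ.filter (fun w => mu16 w (A ∩ B) / mu16 w A ≥ (9 : ℚ)/10)

lemma mu16_eq (w : Fin 11) (A : Finset (Fin 11)) :
    mu16 w A = (A.card : ℚ)/100 + (if w ∈ A then (89 : ℚ)/100 else 0) := by
  unfold mu16
  have h : ∀ v : Fin 11, (if v = w then (9:ℚ)/10 else 1/100)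
      = 1/100 + (if v = w then (89:ℚ)/100 else 0) := by
    intro v; split <;> norm_num
  simp_rw [h, Finset.sum_add_distrib, Finset.sum_const,
    Finset.sum_ite_eq' A w (fun _ => (89:ℚ)/100)]
  push_cast
  ring

lemma card_le_11 (A : Finset (Fin 11)) : A.card ≤ 11 := by
  simpa using A.card_le_univ

lemma mem_imp16 (w : Fin 11) (A B : Finset (Fin 11)) :
    w ∈ imp16 A B ↔ (w ∈ A ∧ w ∈ B) ∨
      (w ∉ A ∧ 9 * A.card ≤ 10 * (A ∩ B).card ∧ A.Nonempty) := by
  have hmn : (A ∩ B).card ≤ A.card := Finset.card_le_card Finset.inter_subset_left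
  have hn11 : A.card ≤ 11 := card_le_11 A
  rw [imp16, Finset.mem_filter]
  simp only [Finset.mem_univ, true_and]
  rw [mu16_eq, mu16_eq, ge_iff_le]
  by_cases hA : w ∈ A
  · by_cases hB : w ∈ B
    · rw [if_pos (Finset.mem_inter.mpr ⟨hA, hB⟩), if_pos hA]
      have hm1 : 1 ≤ (A ∩ B).card :=
        Finset.card_pos.mpr ⟨w, Finset.mem_inter.mpr ⟨hA, hB⟩⟩
      have hden : (0:ℚ) < (A.card : ℚ)/100 + 89/100 := by
        have : (0:ℚ) ≤ (A.card : ℚ) := Nat.cast_nonneg _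
        linarith
      constructor
      · intro _; exact Or.inl ⟨hA, hB⟩
      · intro _
        rw [le_div_iff₀ hden]
        have hc1 : (1:ℚ) ≤ ((A ∩ B).card : ℚ) := by exact_mod_cast hm1
        have hc2 : (A.card : ℚ) ≤ 11 := by exact_mod_cast hn11
        linarith
    · have hAB : w ∉ A ∩ B := fun h => hB (Finset.mem_inter.mp h).2
      rw [if_neg hAB, if_pos hA]
      have hden : (0:ℚ) < (A.card : ℚ)/100 + 89/100 := by
        have : (0:ℚ) ≤ (A.card : ℚ) := Nat.cast_nonneg _
        linarith
      constructor
      · intro hle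
        exfalso
        rw [le_div_iff₀ hden] at hle
        have hc2 : (A.card : ℚ) ≤ 11 := by exact_mod_cast hn11
        have hc3 : ((A ∩ B).card : ℚ) ≤ 11 := by
          exact_mod_cast le_trans hmn hn11
        have hc4 : (0:ℚ) ≤ (A.card : ℚ) := Nat.cast_nonneg _
        linarith
      · rintro (⟨_, h⟩ | ⟨h, _⟩)
        · exact absurd h hB
        · exact absurd hA h
  · have hAB : w ∉ A ∩ B := fun h => hA (Finset.mem_inter.mp h).1
    rw [if_neg hAB, if_neg hA, add_zero, add_zero]
    rcases A.eq_empty_or_nonempty with hAe | hAne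
    · subst hAe
      constructor
      · intro hle
        exfalso
        simp only [Finset.empty_inter, Finset.card_empty, Nat.cast_zero] at hle
        norm_num at hle
      · rintro (⟨h, _⟩ | ⟨_, _, h⟩)
        · exact absurd h hA
        · exact absurd h (by simp)
    · have hnpos : 0 < A.card := Finset.card_pos.mpr hAne
      have hden : (0:ℚ) < (A.card : ℚ)/100 := by
        have : (0:ℚ) < (A.card : ℚ) := by exact_mod_cast hnpos
        linarith
      rw [le_div_iff₀ hden]
      constructor
      · intro hle
        refine Or.inr ⟨hA, ?_, hAne⟩
        have : (9:ℚ) * A.card ≤ 10 * (A ∩ B).card := by nlinarith [hle]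
        exact_mod_cast this
      · rintro (⟨h1, _⟩ | ⟨_, hle, _⟩)
        · exact absurd h1 hA
        · have : (9:ℚ) * A.card ≤ 10 * (A ∩ B).card := by exact_mod_cast hle
          nlinarith [this]

theorem stmt_16 :
    (∀ A : Finset (Fin 11), imp16 ⊤ A ⊆ A) ∧
    (∀ A B : Finset (Fin 11), A ∩ B ⊆ imp16 A B) ∧
    (∀ A B : Finset (Fin 11), imp16 A B ⊆ imp16 A (A ∩ B)) ∧
    (∀ A B C : Finset (Fin 11), imp16 A (B ∩ C) ⊆ imp16 A B) ∧
    (∀ A B C : Finset (Fin 11), imp16 A (imp16 (A ∩ B) C) ⊆ imp16 (A ∩ B) C) ∧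
    (∀ A B : Finset (Fin 11), A ∩ imp16 A B ⊆ B) ∧
    (∃ A B C : Finset (Fin 11), ¬ (imp16 A B ∩ imp16 A C ⊆ imp16 A (B ∩ C))) := by
  refine ⟨?_, ?_, ?_, ?_, ?_, ?_, ?_⟩
  · -- (1)
    intro A w hw
    rw [mem_imp16] at hw
    rcases hw with ⟨_, h⟩ | ⟨h, _⟩
    · exact h
    · exact absurd (by simp [Finset.top_eq_univ] : w ∈ (⊤ : Finset (Fin 11))) h
  · -- (2)
    intro A B w hw
    rw [Finset.mem_inter] at hw
    rw [mem_imp16]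
    exact Or.inl hw
  · -- (3)
    intro A B w hw
    have hAAB : A ∩ (A ∩ B) = A ∩ B := by
      rw [← Finset.inter_assoc, Finset.inter_self]
    rw [mem_imp16] at hw ⊢
    rw [hAAB]
    rcases hw with ⟨h1, h2⟩ | h
    · exact Or.inl ⟨h1, Finset.mem_inter.mpr ⟨h1, h2⟩⟩
    · exact Or.inr h
  · -- (4)
    intro A B C w hw
    rw [mem_imp16] at hw ⊢
    rcases hw with ⟨h1, h2⟩ | ⟨h1, h2, h3⟩
    · exact Or.inl ⟨h1, (Finset.mem_inter.mp h2).1⟩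
    · refine Or.inr ⟨h1, ?_, h3⟩
      have hsub : A ∩ (B ∩ C) ⊆ A ∩ B := by
        intro v hv
        simp only [Finset.mem_inter] at hv ⊢
        tauto
      have := Finset.card_le_card hsub
      omega
  · -- (5)
    intro A B C w hw
    rw [mem_imp16] at hw
    rcases hw with ⟨_, h2⟩ | ⟨hA, hcard, hAne⟩
    · exact h2
    · have hwAB : w ∉ A ∩ B := fun h => hA (Finset.mem_inter.mp h).1
      by_cases hφ : (A ∩ B).Nonempty ∧ 9 * (A ∩ B).card ≤ 10 * ((A ∩ B) ∩ C).card
      · rw [mem_imp16]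
        exact Or.inr ⟨hwAB, hφ.2, hφ.1⟩
      · exfalso
        have hsub : A ∩ imp16 (A ∩ B) C ⊆ (A ∩ B) ∩ C := by
          intro v hv
          rw [Finset.mem_inter, mem_imp16] at hv
          rcases hv with ⟨hvA, ⟨hv1, hv2⟩ | ⟨_, hv2, hv3⟩⟩
          · exact Finset.mem_inter.mpr ⟨hv1, hv2⟩
          · exact absurd ⟨hv3, hv2⟩ hφ
        have h1 := Finset.card_le_card hsub
        have h2 : ((A ∩ B) ∩ C).card ≤ (A ∩ B).card :=
          Finset.card_le_card Finset.inter_subset_left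
        have h3 : (A ∩ B).card ≤ A.card :=
          Finset.card_le_card Finset.inter_subset_left
        have h4 : 0 < A.card := Finset.card_pos.mpr hAne
        rcases (A ∩ B).eq_empty_or_nonempty with he | hne
        · have hc0 : ((A ∩ B) ∩ C).card = 0 := by rw [he]; simp
          omega
        · have : ¬ (9 * (A ∩ B).card ≤ 10 * ((A ∩ B) ∩ C).card) := fun h => hφ ⟨hne, h⟩
          omega
  · -- (6) modus ponens
    intro A B w hw
    rw [Finset.mem_inter, mem_imp16] at hw
    rcases hw with ⟨hA, ⟨_, hB⟩ | ⟨hnA, _⟩⟩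
    · exact hB
    · exact absurd hA hnA
  · -- (7) failure of normality
    refine ⟨({1,2,3,4,5,6,7,8,9,10} : Finset (Fin 11)),
      ({2,3,4,5,6,7,8,9,10} : Finset (Fin 11)),
      ({1,3,4,5,6,7,8,9,10} : Finset (Fin 11)), ?_⟩
    intro h
    have h0 : (0 : Fin 11) ∈ imp16 ({1,2,3,4,5,6,7,8,9,10} : Finset (Fin 11))
        ({2,3,4,5,6,7,8,9,10} : Finset (Fin 11)) ∩
        imp16 ({1,2,3,4,5,6,7,8,9,10} : Finset (Fin 11))
        ({1,3,4,5,6,7,8,9,10} : Finset (Fin 11)) := by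
      rw [Finset.mem_inter, mem_imp16, mem_imp16]
      constructor
      · right
        refine ⟨by decide, ?_, ⟨1, by decide⟩⟩
        have : (({1,2,3,4,5,6,7,8,9,10} : Finset (Fin 11)) ∩
            ({2,3,4,5,6,7,8,9,10} : Finset (Fin 11))).card = 9 := by decide
        rw [this]
        have : ({1,2,3,4,5,6,7,8,9,10} : Finset (Fin 11)).card = 10 := by decide
        rw [this]
      · right
        refine ⟨by decide, ?_, ⟨1, by decide⟩⟩
        have : (({1,2,3,4,5,6,7,8,9,10} : Finset (Fin 11)) ∩
            ({1,3,4,5,6,7,8,9,10} : Finset (Fin 11))).card = 9 := by decide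
        rw [this]
        have : ({1,2,3,4,5,6,7,8,9,10} : Finset (Fin 11)).card = 10 := by decide
        rw [this]
    have h2 := h h0
    rw [mem_imp16] at h2
    rcases h2 with ⟨h3, _⟩ | ⟨_, h3, _⟩
    · exact absurd h3 (by decide)
    · have e1 : (({1,2,3,4,5,6,7,8,9,10} : Finset (Fin 11)) ∩
          (({2,3,4,5,6,7,8,9,10} : Finset (Fin 11)) ∩
           ({1,3,4,5,6,7,8,9,10} : Finset (Fin 11)))).card = 8 := by decide
      have e2 : ({1,2,3,4,5,6,7,8,9,10} : Finset (Fin 11)).card = 10 := by decide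
      rw [e1, e2] at h3
      omega
end

section
/- Let X be a set and ◁ a binary relation on X. Define A →_◁ B = {x ∈ X | ∀y ◁ x, y ∈ A ⇒ ∃z with y ◁ z and z ∈ A ∩ B}. Then the operation c_◁(A) := X →_◁ A is a closure operator on ℘(X): it is monotone, inflationary, and idempotent. -/
def impRel17 {X : Type*} (lt : X → X → Prop) (A B : Set X) : Set X :=
  {x | ∀ y, lt y x → y ∈ A → ∃ z, lt y z ∧ z ∈ A ∩ B}

def cRel17 {X : Type*} (lt : X → X → Prop) (A : Set X) : Set X :=
  impRel17 lt Set.univ A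

theorem stmt_17 {X : Type*} (lt : X → X → Prop) :
    (∀ A B : Set X, A ⊆ B → cRel17 lt A ⊆ cRel17 lt B) ∧
    (∀ A : Set X, A ⊆ cRel17 lt A) ∧
    (∀ A : Set X, cRel17 lt (cRel17 lt A) = cRel17 lt A) := by
  have infl : ∀ A : Set X, A ⊆ cRel17 lt A := by
    intro A x hx y hy _
    exact ⟨x, hy, trivial, hx⟩
  refine ⟨fun A B hAB x hx y hy hyu => ?_, infl, fun A => ?_⟩
  · obtain ⟨z, hz, _, hzA⟩ := hx y hy hyu
    exact ⟨z, hz, trivial, hAB hzA⟩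
  · apply Set.Subset.antisymm _ (infl _)
    intro x hx y hy _
    obtain ⟨z, hyz, _, hzc⟩ := hx y hy trivial
    obtain ⟨u, hyu, _, huA⟩ := hzc y hyz trivial
    exact ⟨u, hyu, trivial, huA⟩
end

section
/- Let X be a set and ◁ a binary relation on X, with A →_◁ B = {x ∈ X | ∀y ◁ x, y ∈ A ⇒ ∃z ▷ y with z ∈ A ∩ B} and c_◁(A) = X →_◁ A. If A and B are fixpoints of c_◁, then A →_◁ B is a fixpoint of c_◁. -/
def impRel18 {X : Type*} (lt : X → X → Prop) (A B : Set X) : Set X :=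
  {x | ∀ y, lt y x → y ∈ A → ∃ z, lt y z ∧ z ∈ A ∩ B}

def cRel18 {X : Type*} (lt : X → X → Prop) (A : Set X) : Set X :=
  impRel18 lt Set.univ A

theorem stmt_18 {X : Type*} (lt : X → X → Prop) (A B : Set X)
    (hA : cRel18 lt A = A) (hB : cRel18 lt B = B) :
    cRel18 lt (impRel18 lt A B) = impRel18 lt A B := by
  ext x
  constructor
  · intro hx y hyx hyA
    obtain ⟨z, hyz, _, hz⟩ := hx y hyx trivial
    exact hz y hyz hyA
  · intro hx y hyx _
    exact ⟨x, hyx, trivial, hx⟩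
end

section
/- Let L be a bounded lattice with a preconditional →. For any a, b ∈ L, the pair (↑a, ↓(a→b)) consisting of the principal filter generated by a and the principal ideal generated by a→b satisfies: for all c, d ∈ L, if a ≤ c and c ∧ d ≤ a→b, then c→d ≤ a→b. -/
theorem stmt_19 {L : Type*} [Lattice L] [BoundedOrder L] (imp : L → L → L)
    (h1 : ∀ a : L, imp ⊤ a ≤ a)
    (h2 : ∀ a b : L, a ⊓ b ≤ imp a b)
    (h3 : ∀ a b : L, imp a b ≤ imp a (a ⊓ b))
    (h4 : ∀ a b c : L, imp a (b ⊓ c) ≤ imp a b)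
    (h5 : ∀ a b c : L, imp a (imp (a ⊓ b) c) ≤ imp (a ⊓ b) c)
    (a b : L) :
    ∀ c d : L, a ≤ c → c ⊓ d ≤ imp a b → imp c d ≤ imp a b := by
  intro c d hac hcd
  have mono : ∀ x y : L, x ≤ y → imp c x ≤ imp c y := by
    intro x y hxy
    have : imp c (y ⊓ x) ≤ imp c y := h4 c y x
    rwa [inf_eq_right.mpr hxy] at this
  have step1 : imp c d ≤ imp c (imp a b) :=
    le_trans (h3 c d) (mono _ _ hcd)
  have step2 : imp c (imp a b) ≤ imp a b := by
    have := h5 c a b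
    rwa [inf_eq_right.mpr hac] at this
  exact le_trans step1 step2
end
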